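/- The value of a minimum s-t cut (S,T) of the flow graph equals Σ_{q ∈ Q⁻∩T} |w(q)| + Σ_{q ∈ Q⁺\T} w(q), provided the cut contains no infinite-capacity edge; consequently u(T\{t}) = Σ_{q∈Q⁺} w(q) − cutvalue(S,T). -/
import Mathlib


open Finset

namespace FlowGraph7

variable {Q : Type*} [Fintype Q] [DecidableEq Q]

/-- Vertices: the queries plus a source `inr false` and a sink `inr true`. -/
abbrev V (Q : Type*) := Q ⊕ Bool

/-- Capacities: `s → q` of capacity `|w q|` for `q ∈ Q⁻`, `p → t` of capacity
`w p` for `p ∈ Q⁺`, and a large capacity `M` dependency edge for each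
`(p, q) ∈ C` with `p ∈ Q⁺`, `q ∈ Q⁻` (oriented so that a directed cut pays `M`
exactly when `p` is on the sink side while `q` is on the source side). -/
noncomputable def cap (C : Finset (Q × Q)) (w : Q → ℝ) (M : ℝ) : V Q → V Q → ℝ
  | Sum.inr false, Sum.inl q => if w q ≤ 0 then |w q| else 0
  | Sum.inl p, Sum.inr true => if 0 < w p then w p else 0
  | Sum.inl q, Sum.inl p => if (p, q) ∈ C ∧ 0 < w p ∧ w q ≤ 0 then M else 0
  | _, _ => 0

/-- Cut value of `(S, Sᶜ)`. -/
noncomputable def cutVal (C : Finset (Q × Q)) (w : Q → ℝ) (M : ℝ)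
    (S : Finset (V Q)) : ℝ :=
  ∑ u ∈ S, ∑ v ∈ Sᶜ, cap C w M u v

/-- for a cut `(S, Sᶜ)` containing no "infinite"-capacity edge,
the cut value equals `Σ_{q ∈ Q⁻ ∩ T} |w q| + Σ_{q ∈ Q⁺ \ T} w q`, and hence
the utility of the sink-side query set `T'` is `Σ_{Q⁺} w − cutval`. -/
theorem stmt_7 (C : Finset (Q × Q)) (w : Q → ℝ) (M : ℝ)
    (S : Finset (V Q)) (hs : Sum.inr false ∈ S) (ht : Sum.inr true ∉ S)
    (hnoInf : ∀ p q, (p, q) ∈ C → 0 < w p → w q ≤ 0 →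
      Sum.inl p ∉ S → Sum.inl q ∉ S) :
    cutVal C w M S =
      (∑ q ∈ univ.filter (fun q => w q ≤ 0 ∧ Sum.inl q ∉ S), |w q|) +
      (∑ q ∈ univ.filter (fun q => 0 < w q ∧ Sum.inl q ∈ S), w q) ∧
    (∑ q ∈ univ.filter (fun q => Sum.inl q ∉ S), w q) =
      (∑ q ∈ univ.filter (fun q => 0 < w q), w q) - cutVal C w M S := by
  classical
  have hcross : ∀ a b : Q, Sum.inl a ∈ S → Sum.inl b ∉ S →
      cap C w M (Sum.inl a) (Sum.inl b) = 0 := by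
    intro a b ha hb
    show (if (b, a) ∈ C ∧ 0 < w b ∧ w a ≤ 0 then M else 0) = 0
    rw [if_neg]
    rintro ⟨h1, h2, h3⟩
    exact (hnoInf b a h1 h2 h3 hb) ha
  have h1 : cutVal C w M S =
      (∑ q ∈ univ.filter (fun q => w q ≤ 0 ∧ Sum.inl q ∉ S), |w q|) +
      (∑ q ∈ univ.filter (fun q => 0 < w q ∧ Sum.inl q ∈ S), w q) := by
    have key : cutVal C w M S =
        ∑ u : V Q, ∑ v : V Q, (if u ∈ S ∧ v ∉ S then cap C w M u v else 0) := by
      unfold cutVal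
      rw [show (∑ u : V Q, ∑ v : V Q, (if u ∈ S ∧ v ∉ S then cap C w M u v else 0))
          = ∑ u : V Q, if u ∈ S then ∑ v : V Q, (if v ∉ S then cap C w M u v else 0) else 0 from by
        apply Finset.sum_congr rfl
        intro u _
        by_cases hu : u ∈ S <;> simp [hu]]
      rw [Finset.sum_ite_mem, Finset.univ_inter]
      apply Finset.sum_congr rfl
      intro u _
      rw [show (fun v => if v ∉ S then cap C w M u v else 0)
          = fun v => if v ∈ Sᶜ then cap C w M u v else 0 from by
        funext v; simp]
      rw [Finset.sum_ite_mem, Finset.univ_inter]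
    rw [key, Fintype.sum_sum_type]
    simp only [Fintype.sum_sum_type, Fintype.sum_bool]
    have hcross' : ∀ a b : Q,
        (if Sum.inl a ∈ S ∧ Sum.inl b ∉ S then cap C w M (Sum.inl a) (Sum.inl b) else 0) = 0 := by
      intro a b
      split
      · exact hcross a b (by tauto) (by tauto)
      · rfl
    simp only [hcross', Finset.sum_const_zero]
    rw [Finset.sum_filter, Finset.sum_filter]
    simp [cap, hs, ht]
    rw [add_comm]
    congr 1 <;> (apply Finset.sum_congr rfl; intro q _) <;>
      by_cases hq1 : 0 < w q <;> by_cases hq2 : Sum.inl q ∈ S <;>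
      simp [hq1, hq2, not_lt.mp, le_of_not_gt]
  refine ⟨h1, ?_⟩
  rw [h1]
  rw [Finset.sum_filter, Finset.sum_filter, Finset.sum_filter, Finset.sum_filter]
  rw [← Finset.sum_add_distrib, ← Finset.sum_sub_distrib]
  apply Finset.sum_congr rfl
  intro q _
  by_cases hq1 : 0 < w q <;> by_cases hq2 : Sum.inl q ∈ S
  · simp [hq1, hq2, not_le.mpr hq1]
  · simp [hq1, hq2, not_le.mpr hq1]
  · simp [hq1, hq2, not_lt.mp hq1, abs_of_nonpos (not_lt.mp hq1)]
  · simp [hq1, hq2, not_lt.mp hq1, abs_of_nonpos (not_lt.mp hq1)]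

end FlowGraph7
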